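/- arXiv:1907.09400 — 3 statements merged into one kernel-verified Lean document; each statement's English description precedes it below -/
import Mathlib

section
/- Let (X,d) be a compact metric space and f : X → X a continuous map. Let x, y ∈ X and suppose there exist sequences of natural numbers (n_k), (m_k) with m_k → ∞ and n_k/(n_k + m_k) → 0 as k → ∞, and a sequence of positive reals ε_k → 0, such that for every k and every 0 ≤ i ≤ m_k one has d(f^{n_k + i} x, f^{n_k + i} y) < ε_k. Then for every t > 0, limsup_{n→∞} (1/n) #{0 ≤ i ≤ n-1 : d(f^i x, f^i y) < t} = 1; that is, the first (upper-density) condition in the definition of a DC1-scrambled pair holds for x and y. -/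
open Filter Topology MeasureTheory
open scoped Matrix.Norms.L2Operator

noncomputable section

/-- The cocycle `A(x,n) = A(f^[n-1] x) ⋯ A(f x) A(x)` induced by a matrix function
`A : X → GL(m,ℝ)` over a map `f : X → X`. -/
def cocycle {X : Type*} {m : ℕ} (f : X → X) (A : X → Matrix.GeneralLinearGroup (Fin m) ℝ)
    (x : X) : ℕ → Matrix (Fin m) (Fin m) ℝ
  | 0 => 1
  | n + 1 => (A (f^[n] x) : Matrix (Fin m) (Fin m) ℝ) * cocycle f A x n

/-- A point is Max-Lyapunov-regular for `A` if `(1/n) log ‖A(x,n)‖` converges (operator norm). -/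
def MaxLyapunovRegular {X : Type*} {m : ℕ} (f : X → X)
    (A : X → Matrix.GeneralLinearGroup (Fin m) ℝ) (x : X) : Prop :=
  ∃ χ : ℝ, Filter.Tendsto (fun n : ℕ => (1 / (n : ℝ)) * Real.log ‖cocycle f A x n‖)
    Filter.atTop (nhds χ)

/-- The set of Max-Lyapunov-irregular points. -/
def MLI {X : Type*} {m : ℕ} (f : X → X) (A : X → Matrix.GeneralLinearGroup (Fin m) ℝ) :
    Set X := {x | ¬ MaxLyapunovRegular f A x}

/-- A point is (forward) Lyapunov-regular for `A` if there are `r ≤ m`, exponents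
`χ_1 < ⋯ < χ_r` and a direct sum decomposition `ℝ^m = G_1 ⊕ ⋯ ⊕ G_r` into nonzero subspaces
realizing the exponents as limits `(1/n) log ‖A(x,n) v‖ → χ_i` for nonzero `v ∈ G_i`. -/
def LyapunovRegular {X : Type*} {m : ℕ} (f : X → X)
    (A : X → Matrix.GeneralLinearGroup (Fin m) ℝ) (x : X) : Prop :=
  ∃ r : ℕ, r ≤ m ∧ ∃ χ : Fin r → ℝ, StrictMono χ ∧
    ∃ G : Fin r → Submodule ℝ (Fin m → ℝ), DirectSum.IsInternal G ∧ (∀ i, G i ≠ ⊥) ∧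
      ∀ i : Fin r, ∀ v ∈ G i, v ≠ 0 →
        Filter.Tendsto (fun n : ℕ => (1 / (n : ℝ)) * Real.log ‖(cocycle f A x n).mulVec v‖)
          Filter.atTop (nhds (χ i))

/-- The set of Lyapunov-irregular points. -/
def LI {X : Type*} {m : ℕ} (f : X → X) (A : X → Matrix.GeneralLinearGroup (Fin m) ℝ) :
    Set X := {x | ¬ LyapunovRegular f A x}

/-- `A` is `α`-Hölder continuous. -/
def HolderMat {X : Type*} [MetricSpace X] {m : ℕ} (α : ℝ)
    (A : X → Matrix.GeneralLinearGroup (Fin m) ℝ) : Prop :=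
  ∃ C > 0, ∀ x y : X,
    ‖(A x : Matrix (Fin m) (Fin m) ℝ) - (A y : Matrix (Fin m) (Fin m) ℝ)‖ ≤ C * dist x y ^ α

/-- The orbit segments `x, …, f^n x` and `y, …, f^n y` are exponentially `δ`-close with
exponent `λ`. -/
def ExpClose {X : Type*} [MetricSpace X] (f : X → X) (lam δ : ℝ) (n : ℕ) (x y : X) : Prop :=
  ∀ i ≤ n, dist (f^[i] x) (f^[i] y) < δ * Real.exp (-lam * (min i (n - i) : ℕ))

/-- The exponential specification property with exponent `lam`, with a prescribed gap
function `N : ℝ → ℕ` (for each precision `δ > 0`, `N δ` is the required gap). -/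
def ExpSpecificationWith {X : Type*} [MetricSpace X] (f : X → X) (lam : ℝ) (N : ℝ → ℕ) : Prop :=
  ∀ δ > 0, ∀ (k : ℕ) (x : Fin (k + 1) → X) (M : Fin (k + 1) → ℕ) (T : Fin (k + 1) → ℕ),
    T 0 = 0 → (∀ j : Fin k, T j.castSucc + M j.castSucc + N δ ≤ T j.succ) →
    ∃ g : X, ∀ j : Fin (k + 1), ExpClose f lam δ (M j) (x j) (f^[T j] g)

/-- The exponential specification property with exponent `lam`. -/
def ExpSpecification {X : Type*} [MetricSpace X] (f : X → X) (lam : ℝ) : Prop :=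
  ∃ N : ℝ → ℕ, ExpSpecificationWith f lam N

/-- `#{0 ≤ i ≤ n-1 : d(f^i x, f^i y) < t}`. -/
def dcCount {X : Type*} [MetricSpace X] (f : X → X) (x y : X) (t : ℝ) (n : ℕ) : ℕ :=
  ((Finset.range n).filter fun i => dist (f^[i] x) (f^[i] y) < t).card

/-- A DC1-scrambled pair. -/
def DC1Pair {X : Type*} [MetricSpace X] (f : X → X) (x y : X) : Prop :=
  (∀ t > 0,
    Filter.atTop.limsup (fun n : ℕ => (dcCount f x y t n : ℝ) / n) = 1) ∧
  ∃ t₀ > 0, Filter.atTop.liminf (fun n : ℕ => (dcCount f x y t₀ n : ℝ) / n) = 0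

/-- A DC1-scrambled set: every pair of distinct points in `S` is DC1-scrambled. -/
def DC1ScrambledSet {X : Type*} [MetricSpace X] (f : X → X) (S : Set X) : Prop :=
  S.Pairwise (DC1Pair f)

/-- The `i`-th compound matrix: the matrix of the induced map `∧^i B` on the `i`-th exterior
power `∧^i ℝ^m` in the standard basis `{e_S : S ⊆ {1,…,m}, #S = i}`; its entries are the
`i × i` minors of `B`. -/
def compound {m : ℕ} (i : ℕ) (B : Matrix (Fin m) (Fin m) ℝ) :
    Matrix {s : Finset (Fin m) // s.card = i} {s : Finset (Fin m) // s.card = i} ℝ :=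
  Matrix.of fun s t =>
    (B.submatrix (fun a : Fin i => ((s.1.orderIsoOfFin s.2 a : Fin m)))
      (fun b : Fin i => ((t.1.orderIsoOfFin t.2 b : Fin m)))).det

end

/-
At the times `N_k = n_k + m_k`, once `ε_k < t` every time of the window `[n_k, n_k + m_k)` is
counted, so the density at `N_k` is at least `m_k / N_k = 1 - n_k / N_k → 1`. Densities never
exceed `1`, so `1` is the upper density.
-/

theorem limsup_eq_of_eventually_le_of_tendsto_comp {ι α β : Type*}
    [ConditionallyCompleteLinearOrder β] [TopologicalSpace β] [OrderTopology β]
    {f : Filter ι} [NeBot f] {g : Filter α} {v : ι → α} {u : α → β} {c : β}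
    (hv : Tendsto v f g) (hle : ∀ᶠ a in g, u a ≤ c) (huv : Tendsto (u ∘ v) f (𝓝 c)) :
    limsup u g = c := by
  have hcobdd : (map v f).IsCoboundedUnder (· ≤ ·) u := huv.isCoboundedUnder_le
  refine le_antisymm (limsup_le_of_le (hcobdd.mono (map_mono hv)) hle) ?_
  calc c = limsup (u ∘ v) f := huv.limsup_eq.symm
    _ ≤ limsup u g := hv.limsup_comp_le_limsup hcobdd ⟨c, hle⟩

theorem tendsto_div_add_one_of_tendsto_div_add_zero {ι : Type*} {l : Filter ι} {a b : ι → ℝ}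
    (hab : ∀ᶠ i in l, a i + b i ≠ 0) (h : Tendsto (fun i => a i / (a i + b i)) l (𝓝 0)) :
    Tendsto (fun i => b i / (a i + b i)) l (𝓝 1) := by
  have hsub : Tendsto (fun i => 1 - a i / (a i + b i)) l (𝓝 1) := by
    simpa using (tendsto_const_nhds (x := (1 : ℝ))).sub h
  refine hsub.congr' ?_
  filter_upwards [hab] with i hi
  field_simp
  ring

section dcCount

variable {X : Type*} [MetricSpace X] (f : X → X) (x y : X) (t : ℝ)

theorem dcCount_le (N : ℕ) : dcCount f x y t N ≤ N :=
  (Finset.card_filter_le _ _).trans (Finset.card_range N).le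

theorem dcCount_div_le_one (N : ℕ) : (dcCount f x y t N : ℝ) / N ≤ 1 :=
  div_le_one_of_le₀ (by exact_mod_cast dcCount_le f x y t N) N.cast_nonneg

theorem le_dcCount_add {a m : ℕ} (h : ∀ i < m, dist (f^[a + i] x) (f^[a + i] y) < t) :
    m ≤ dcCount f x y t (a + m) := by
  have hsub : Finset.Ico a (a + m) ⊆
      (Finset.range (a + m)).filter fun i => dist (f^[i] x) (f^[i] y) < t := by
    intro i hi
    obtain ⟨hai, hia⟩ := Finset.mem_Ico.1 hi
    obtain ⟨j, rfl⟩ := Nat.exists_eq_add_of_le hai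
    exact Finset.mem_filter.2 ⟨Finset.mem_range.2 hia, h j (by omega)⟩
  calc m = (Finset.Ico a (a + m)).card := by simp
    _ ≤ dcCount f x y t (a + m) := Finset.card_le_card hsub

end dcCount

theorem dc1_upper_density_one_of_window_closeness_general
    {X : Type*} [MetricSpace X] (f : X → X)
    (x y : X) (n m : ℕ → ℕ)
    (hm : Filter.Tendsto m Filter.atTop Filter.atTop)
    (hratio : Filter.Tendsto (fun k => (n k : ℝ) / ((n k : ℝ) + (m k : ℝ)))
      Filter.atTop (nhds 0))
    (ε : ℕ → ℝ) (hε0 : Filter.Tendsto ε Filter.atTop (nhds 0))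
    (hclose : ∀ k, ∀ i ≤ m k, dist (f^[n k + i] x) (f^[n k + i] y) < ε k) :
    ∀ t > 0,
      Filter.atTop.limsup (fun N : ℕ => (dcCount f x y t N : ℝ) / N) = 1 := by
  intro t ht
  have hwindow : ∀ᶠ k in atTop, (m k : ℝ) / (n k + m k : ℕ) ≤
      (dcCount f x y t (n k + m k) : ℝ) / (n k + m k : ℕ) := by
    filter_upwards [hε0.eventually_lt_const ht] with k hk
    refine div_le_div_of_nonneg_right ?_ (Nat.cast_nonneg _)
    exact_mod_cast le_dcCount_add f x y t fun i hi => (hclose k i hi.le).trans hk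
  have hdensity : Tendsto (fun k => (m k : ℝ) / (n k + m k : ℕ)) atTop (𝓝 1) := by
    push_cast
    refine tendsto_div_add_one_of_tendsto_div_add_zero ?_ hratio
    filter_upwards [hm.eventually_gt_atTop 0] with k hk
    positivity
  refine limsup_eq_of_eventually_le_of_tendsto_comp
    (tendsto_atTop_mono (fun k => Nat.le_add_left (m k) (n k)) hm)
    (Eventually.of_forall (dcCount_div_le_one f x y t)) ?_
  exact tendsto_of_tendsto_of_tendsto_of_le_of_le' hdensity tendsto_const_nhds hwindow
    (Eventually.of_forall fun k => dcCount_div_le_one f x y t _)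

/-- If the orbits of `x` and `y` are `ε_k`-close (with `ε_k → 0`) along
windows `[n_k, n_k + m_k]` with `m_k → ∞` and `n_k/(n_k+m_k) → 0`, then for every `t > 0`
the upper density of times `i` with `d(f^i x, f^i y) < t` equals `1` (the first condition
in the definition of a DC1-scrambled pair). -/
theorem dc1_upper_density_one_of_window_closeness
    {X : Type*} [MetricSpace X] [CompactSpace X] (f : X → X) (hf : Continuous f)
    (x y : X) (n m : ℕ → ℕ)
    (hm : Filter.Tendsto m Filter.atTop Filter.atTop)
    (hratio : Filter.Tendsto (fun k => (n k : ℝ) / ((n k : ℝ) + (m k : ℝ)))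
      Filter.atTop (nhds 0))
    (ε : ℕ → ℝ) (hε : ∀ k, 0 < ε k) (hε0 : Filter.Tendsto ε Filter.atTop (nhds 0))
    (hclose : ∀ k, ∀ i ≤ m k, dist (f^[n k + i] x) (f^[n k + i] y) < ε k) :
    ∀ t > 0,
      Filter.atTop.limsup (fun N : ℕ => (dcCount f x y t N : ℝ) / N) = 1 :=
  dc1_upper_density_one_of_window_closeness_general f x y n m hm hratio ε hε0 hclose
end

section
/- Let X be a compact metric space and f : X → X a homeomorphism with the exponential specification property with exponent λ > 0; for δ > 0 let N(δ) be a corresponding constant from the definition. Fix δ > 0 and set δ_k = δ/2^k for k ≥ 1. Let (x_k)_{k≥1} be any sequence of points in X, (M_k)_{k≥1} any sequence of natural numbers, and (T_k)_{k≥1} natural numbers with T_1 = 0 and T_{k+1} ≥ T_k + M_k + N(δ_{k+1}) for all k ≥ 1. Then there exists a point g ∈ X such that for every k ≥ 1 and every 0 ≤ i ≤ M_k, d(f^{T_k + i} g, f^i x_k) ≤ 2 δ_k e^{-λ min(i, M_k - i)}. (In other words, a single point g exponentially shadows the infinite sequence of prescribed orbit segments, with precision 2δ_k on the k-th segment.)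 -/
open Filter Topology MeasureTheory
open scoped Matrix.Norms.L2Operator

/-!
Apply exponential specification recursively: `g_{k+1}` follows the whole orbit segment of `g_k`
up to time `T_k + M_k` with precision `δ_{k+1}`, and then the segment of `x_{k+1}`. Since the
precisions halve, `(g_k)` is Cauchy; its limit `g` stays within `δ_{k+1} + δ_{k+2} + ⋯ = δ_k` of
`g_k` along the `k`-th segment, and `g_k` itself is `δ_k`-close to `x_k` there.
-/

section

open Function

variable {X : Type*} [MetricSpace X]

theorem ExpClose.dist_iterate_add_lt {f : X → X} {lam δ : ℝ} {n : ℕ} {x y : X}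
    (h : ExpClose f lam δ n x y) (hlam : 0 ≤ lam) {a m i : ℕ} (ham : a + m ≤ n)
    (hi : i ≤ m) :
    dist (f^[a + i] x) (f^[a + i] y) < δ * Real.exp (-lam * (min i (m - i) : ℕ)) := by
  have hδ : 0 < δ := by
    have h0 := dist_nonneg.trans_lt (h 0 (Nat.zero_le n))
    exact pos_of_mul_pos_left h0 (Real.exp_pos _).le
  have hmin : min i (m - i) ≤ min (a + i) (n - (a + i)) := by omega
  refine (h (a + i) (by omega)).trans_le
    (mul_le_mul_of_nonneg_left (Real.exp_le_exp.2 ?_) hδ.le)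
  exact mul_le_mul_of_nonpos_left (by exact_mod_cast hmin) (neg_nonpos.2 hlam)

namespace ExpSpecificationWith

variable {f : X → X} {lam : ℝ} {N : ℝ → ℕ}

theorem exists_expClose (hN : ExpSpecificationWith f lam N) {δ : ℝ} (hδ : 0 < δ) (x : X)
    (m : ℕ) : ∃ z, ExpClose f lam δ m x z := by
  obtain ⟨z, hz⟩ := hN δ hδ 0 ![x] ![m] ![0] rfl finZeroElim
  exact ⟨z, hz 0⟩

theorem exists_expClose_expClose_iterate (hN : ExpSpecificationWith f lam N) {δ : ℝ}
    (hδ : 0 < δ) (y x : X) {m M t : ℕ} (ht : m + N δ ≤ t) :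
    ∃ z, ExpClose f lam δ m y z ∧ ExpClose f lam δ M x (f^[t] z) := by
  obtain ⟨z, hz⟩ := hN δ hδ 1 ![y, x] ![m, M] ![0, t] rfl (fun j => by fin_cases j; simpa)
  exact ⟨z, hz 0, hz 1⟩

theorem exists_seq_expClose (hN : ExpSpecificationWith f lam N) {δ : ℝ} (hδ : 0 < δ)
    (x : ℕ → X) (M T : ℕ → ℕ) (hT0 : T 0 = 0)
    (hT : ∀ n, T n + M n + N (δ / 2 ^ (n + 1)) ≤ T (n + 1)) :
    ∃ u : ℕ → X, (∀ n, ExpClose f lam (δ / 2 ^ n) (M n) (x n) (f^[T n] (u n))) ∧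
      ∀ n, ExpClose f lam (δ / 2 ^ (n + 1)) (T n + M n) (u n) (u (n + 1)) := by
  obtain ⟨u₀, hu₀⟩ := hN.exists_expClose hδ (x 0) (M 0)
  choose next hnext_prev hnext_seg using fun n y =>
    hN.exists_expClose_expClose_iterate (by positivity) y (x (n + 1)) (M := M (n + 1)) (hT n)
  let u : ℕ → X := fun n => Nat.rec u₀ next n
  refine ⟨u, fun n => ?_, fun n => hnext_prev n (u n)⟩
  cases n with
  | zero => simpa [hT0, u] using hu₀
  | succ n => exact hnext_seg n (u n)

end ExpSpecificationWith

theorem exists_dist_iterate_le_of_expClose_succ [CompleteSpace X] {f : X → X} (hf : Continuous f)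
    {lam δ : ℝ} (hlam : 0 ≤ lam) {L : ℕ → ℕ} (hL : Monotone L) {u : ℕ → X}
    (hu : ∀ n, ExpClose f lam (δ / 2 ^ (n + 1)) (L n) (u n) (u (n + 1))) :
    ∃ g, ∀ k a m i, a + m ≤ L k → i ≤ m →
      dist (f^[a + i] (u k)) (f^[a + i] g) ≤
        δ / 2 ^ k * Real.exp (-lam * (min i (m - i) : ℕ)) := by
  have hstep : ∀ n, dist (u n) (u (n + 1)) ≤ δ / 2 / 2 ^ n := fun n => by
    have h0 := hu n 0 (Nat.zero_le _)
    simp only [iterate_zero, id_eq, zero_min, Nat.cast_zero, mul_zero, Real.exp_zero,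
      mul_one] at h0
    rw [div_div, ← pow_succ']
    exact h0.le
  obtain ⟨g, hg⟩ := cauchySeq_tendsto_of_complete (cauchySeq_of_le_geometric_two hstep)
  refine ⟨g, fun k a m i ham hi => ?_⟩
  set e := Real.exp (-lam * (min i (m - i) : ℕ))
  have htail : ∀ p, dist (f^[a + i] (u (p + k))) (f^[a + i] (u (p + 1 + k))) ≤
      δ / 2 ^ k * e / 2 / 2 ^ p := fun p => by
    have h := (hu (p + k)).dist_iterate_add_lt hlam (ham.trans (hL (Nat.le_add_left k p))) hi
    rw [show p + 1 + k = p + k + 1 by omega]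
    refine h.le.trans_eq ?_
    rw [pow_succ, pow_add]
    ring
  simpa using dist_le_of_le_geometric_two_of_tendsto₀ (f := fun p => f^[a + i] (u (p + k))) htail
    (((hf.iterate _).tendsto g).comp (hg.comp (tendsto_add_atTop_nat k)))

end

/-- For a homeomorphism with exponential specification (with gap function
`N : ℝ → ℕ`), any infinite sequence of orbit segments `x_k, …, f^{M_k} x_k`, placed at times
`T_k` with `T_1 = 0` and `T_{k+1} ≥ T_k + M_k + N(δ/2^{k+1})`, is exponentially shadowed by
a single point `g`, with precision `2·δ/2^k` on the `k`-th segment. -/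
theorem exists_point_shadowing_infinite_segments
    {X : Type*} [MetricSpace X] [CompactSpace X] (f : X ≃ₜ X) (lam : ℝ) (hlam : 0 < lam)
    (N : ℝ → ℕ) (hN : ExpSpecificationWith ⇑f lam N)
    (δ : ℝ) (hδ : 0 < δ) (x : ℕ → X) (M : ℕ → ℕ) (T : ℕ → ℕ)
    (hT1 : T 1 = 0)
    (hT : ∀ k, 1 ≤ k → T k + M k + N (δ / 2 ^ (k + 1)) ≤ T (k + 1)) :
    ∃ g : X, ∀ k, 1 ≤ k → ∀ i ≤ M k,
      dist (f^[T k + i] g) (f^[i] (x k)) ≤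
        2 * (δ / 2 ^ k) * Real.exp (-lam * (min i (M k - i) : ℕ)) := by
  have hhalf : ∀ n : ℕ, δ / 2 / 2 ^ n = δ / 2 ^ (n + 1) := fun n => by
    rw [div_div, ← pow_succ']
  obtain ⟨u, hu_seg, hu_step⟩ := hN.exists_seq_expClose (half_pos hδ) (fun n => x (n + 1))
    (fun n => M (n + 1)) (fun n => T (n + 1)) hT1
    (fun n => by simpa only [hhalf] using hT (n + 1) (Nat.le_add_left 1 n))
  obtain ⟨g, hg⟩ := exists_dist_iterate_le_of_expClose_succ f.continuous hlam.le
    (monotone_nat_of_le_succ fun n => by have := hT (n + 1) (Nat.le_add_left 1 n); omega) hu_step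
  refine ⟨g, fun k hk i hi => ?_⟩
  obtain ⟨n, rfl⟩ : ∃ n, k = n + 1 := ⟨k - 1, by omega⟩
  have h_seg := hu_seg n i hi
  have h_tail := hg n (T (n + 1)) (M (n + 1)) i le_rfl hi
  rw [← Function.iterate_add_apply, add_comm i, dist_comm] at h_seg
  rw [hhalf] at h_seg h_tail
  calc dist (f^[T (n + 1) + i] g) (f^[i] (x (n + 1)))
      ≤ dist (f^[T (n + 1) + i] (u n)) (f^[T (n + 1) + i] g)
        + dist (f^[T (n + 1) + i] (u n)) (f^[i] (x (n + 1))) := dist_triangle_left _ _ _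
    _ ≤ _ := by linarith
end

section
/- Let X be a compact metric space, f : X → X a continuous map, A : X → GL(m,ℝ) a continuous matrix function, and set C = max_{x ∈ X} max(‖A(x)‖, ‖A(x)^{-1}‖). Suppose x ∈ X and there exist real numbers a > b, a constant D > 0, sequences of natural numbers (P_k), (L_k) and (Q_k), (H_k) with L_k → ∞, H_k → ∞, P_k/(P_k + L_k) → 0 and Q_k/(Q_k + H_k) → 0 as k → ∞, such that for all k: ‖A(f^{P_k} x, L_k)‖ ≤ D e^{L_k b} and ‖A(f^{Q_k} x, H_k)‖ ≥ D^{-1} e^{H_k a}. Then the sequence (1/n) log‖A(x,n)‖ diverges as n → ∞ (indeed limsup_{n} (1/n) log‖A(x,n)‖ ≥ a > b ≥ liminf_n (1/n) log‖A(x,n)‖ along the subsequences n = Q_k + H_k and n = P_k + L_k respectively); in particular x belongs to the Max-Lyapunov-irregular set MLI(A,f). -/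
open Filter Topology MeasureTheory
open scoped Matrix.Norms.L2Operator

/-! Submultiplicativity of the operator norm gives `‖A(x, P+L)‖ ≤ C^P ‖A(f^P x, L)‖` and,
since `A(f^Q x, H) = A(x, Q+H) A(x, Q)⁻¹`, also `‖A(f^Q x, H)‖ ≤ C^Q ‖A(x, Q+H)‖`. As the
prefixes `P_k`, `Q_k` are negligible against the window lengths, `(1/n) log ‖A(x,n)‖` is at most
`b + o(1)` along `n = P_k + L_k` and at least `a - o(1)` along `n = Q_k + H_k`; it is bounded by
`log C` in absolute value, so `liminf ≤ b < a ≤ limsup`. -/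

section Subsequence

variable {α ι β : Type*} [ConditionallyCompleteLinearOrder α] [TopologicalSpace α]
  [OrderTopology α] [DenselyOrdered α] {l : Filter ι} [l.NeBot] {l' : Filter β}
  {u : β → α} {v : ι → α} {n : ι → β} {a : α}

theorem le_limsup_of_tendsto_of_le_comp (hn : Tendsto n l l') (hv : Tendsto v l (𝓝 a))
    (hvu : ∀ i, v i ≤ u (n i)) (hu : l'.IsBoundedUnder (· ≤ ·) u) : a ≤ limsup u l' := by
  refine le_of_forall_lt_imp_le_of_dense fun c hc => le_limsup_of_frequently_le ?_ hu
  exact hn.frequently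
    ((hv.eventually (lt_mem_nhds hc)).mono fun i hi => hi.le.trans (hvu i)).frequently

theorem liminf_le_of_tendsto_of_comp_le (hn : Tendsto n l l') (hv : Tendsto v l (𝓝 a))
    (huv : ∀ i, u (n i) ≤ v i) (hu : l'.IsBoundedUnder (· ≥ ·) u) : liminf u l' ≤ a :=
  le_limsup_of_tendsto_of_le_comp (α := αᵒᵈ) hn hv huv hu

end Subsequence

theorem tendsto_add_mul_div_window {P L : ℕ → ℕ} (hL : Tendsto L atTop atTop)
    (hPL : Tendsto (fun k => (P k : ℝ) / (P k + L k)) atTop (𝓝 0)) (c r K : ℝ) :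
    Tendsto (fun k => (c + L k * r + P k * K) / (P k + L k)) atTop (𝓝 r) := by
  have hN : Tendsto (fun k => (P k : ℝ) + L k) atTop atTop :=
    tendsto_atTop_mono (fun k => le_add_of_nonneg_left (Nat.cast_nonneg _))
      (tendsto_natCast_atTop_atTop.comp hL)
  have hlim := ((hN.inv_tendsto_atTop.const_mul c).add
    ((tendsto_const_nhds (x := (1 : ℝ)).sub hPL).const_mul r)).add (hPL.const_mul K)
  simp only [mul_zero, sub_zero, mul_one, zero_add, add_zero] at hlim
  refine hlim.congr' ?_
  filter_upwards [hL.eventually_ge_atTop 1] with k hk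
  have : (0 : ℝ) < P k + L k := by positivity
  simp only [Pi.inv_apply]
  field_simp
  ring

theorem Real.log_le_log_add_log_of_le_mul {y c t : ℝ} (hy : 0 < y) (ht : 0 ≤ t) (h : y ≤ c * t) :
    Real.log y ≤ Real.log c + Real.log t := by
  have hct : 0 < c * t := hy.trans_le h
  have hc : 0 < c := pos_of_mul_pos_left hct ht
  rw [← Real.log_mul hc.ne' (pos_of_mul_pos_right hct hc.le).ne']
  exact Real.log_le_log hy h

theorem Matrix.l2_opNorm_one_le {n : Type*} [Fintype n] [DecidableEq n] :
    ‖(1 : Matrix n n ℝ)‖ ≤ 1 := by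
  rw [Matrix.cstar_norm_def, map_one]
  exact ContinuousLinearMap.norm_id_le

section Cocycle

variable {X : Type*} {m : ℕ} {f : X → X} {A : X → Matrix.GeneralLinearGroup (Fin m) ℝ} {C : ℝ}

theorem cocycle_add (x : X) (p l : ℕ) :
    cocycle f A x (p + l) = cocycle f A (f^[p] x) l * cocycle f A x p := by
  induction l with
  | zero => simp [cocycle]
  | succ l ih =>
    rw [← add_assoc, cocycle, cocycle, ih, ← mul_assoc, ← Function.iterate_add_apply, add_comm l]

variable (f A) in
def cocycleGL (x : X) : ℕ → Matrix.GeneralLinearGroup (Fin m) ℝ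
  | 0 => 1
  | n + 1 => A (f^[n] x) * cocycleGL x n

theorem coe_cocycleGL (x : X) (n : ℕ) :
    (cocycleGL f A x n : Matrix (Fin m) (Fin m) ℝ) = cocycle f A x n := by
  induction n with
  | zero => rfl
  | succ n ih => rw [cocycleGL, cocycle, Units.val_mul, ih]

theorem norm_cocycle_pos [Nonempty (Fin m)] (x : X) (n : ℕ) : 0 < ‖cocycle f A x n‖ := by
  rw [← coe_cocycleGL]
  exact norm_pos_iff.mpr (Units.ne_zero _)

theorem norm_cocycle_le (hA : ∀ y, ‖(A y : Matrix (Fin m) (Fin m) ℝ)‖ ≤ C) (x : X) (n : ℕ) :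
    ‖cocycle f A x n‖ ≤ C ^ n := by
  induction n with
  | zero => simpa [cocycle] using Matrix.l2_opNorm_one_le
  | succ n ih =>
    calc ‖cocycle f A x (n + 1)‖
        ≤ ‖(A (f^[n] x) : Matrix (Fin m) (Fin m) ℝ)‖ * ‖cocycle f A x n‖ := norm_mul_le _ _
      _ ≤ C * C ^ n := mul_le_mul (hA _) ih (norm_nonneg _) ((norm_nonneg _).trans (hA x))
      _ = C ^ (n + 1) := (pow_succ' C n).symm

theorem norm_inv_cocycleGL_le
    (hA : ∀ y, ‖((A y)⁻¹ : Matrix (Fin m) (Fin m) ℝ)‖ ≤ C) (x : X) (n : ℕ) :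
    ‖(((cocycleGL f A x n)⁻¹ : Matrix.GeneralLinearGroup (Fin m) ℝ) :
      Matrix (Fin m) (Fin m) ℝ)‖ ≤ C ^ n := by
  induction n with
  | zero => simpa [cocycleGL] using Matrix.l2_opNorm_one_le
  | succ n ih =>
    rw [cocycleGL, mul_inv_rev, Units.val_mul, pow_succ]
    refine (norm_mul_le _ _).trans (mul_le_mul ih ?_ (norm_nonneg _) ((norm_nonneg _).trans ih))
    rw [Matrix.coe_units_inv]
    exact hA _

theorem norm_cocycle_add_le (hA : ∀ y, ‖(A y : Matrix (Fin m) (Fin m) ℝ)‖ ≤ C)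
    (x : X) (p l : ℕ) : ‖cocycle f A x (p + l)‖ ≤ C ^ p * ‖cocycle f A (f^[p] x) l‖ := by
  rw [cocycle_add, mul_comm (C ^ p)]
  exact (norm_mul_le _ _).trans
    (mul_le_mul_of_nonneg_left (norm_cocycle_le hA x p) (norm_nonneg _))

theorem norm_cocycle_iterate_le (hA : ∀ y, ‖((A y)⁻¹ : Matrix (Fin m) (Fin m) ℝ)‖ ≤ C)
    (x : X) (q h : ℕ) : ‖cocycle f A (f^[q] x) h‖ ≤ C ^ q * ‖cocycle f A x (q + h)‖ := by
  have hsplit : cocycle f A (f^[q] x) h =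
      cocycle f A x (q + h) * ((cocycleGL f A x q)⁻¹ : Matrix.GeneralLinearGroup (Fin m) ℝ) := by
    rw [cocycle_add, ← coe_cocycleGL x q, mul_assoc, Units.mul_inv, mul_one]
  rw [hsplit, mul_comm (C ^ q)]
  exact (norm_mul_le _ _).trans
    (mul_le_mul_of_nonneg_left (norm_inv_cocycleGL_le hA x q) (norm_nonneg _))

theorem abs_div_log_norm_cocycle_le [Nonempty (Fin m)]
    (hA : ∀ y, ‖(A y : Matrix (Fin m) (Fin m) ℝ)‖ ≤ C)
    (hAinv : ∀ y, ‖((A y)⁻¹ : Matrix (Fin m) (Fin m) ℝ)‖ ≤ C) (x : X) (n : ℕ) :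
    |1 / (n : ℝ) * Real.log ‖cocycle f A x n‖| ≤ Real.log C := by
  have hlog (n : ℕ) : |Real.log ‖cocycle f A x n‖| ≤ n * Real.log C := by
    rw [abs_le, ← Real.log_pow]
    constructor
    · have h1 : (1 : ℝ) ≤ C ^ n * ‖cocycle f A x n‖ := by
        simpa [cocycle] using norm_cocycle_iterate_le hAinv x n 0
      have := Real.log_le_log_add_log_of_le_mul one_pos (norm_nonneg _) h1
      linarith [Real.log_one]
    · exact Real.log_le_log (norm_cocycle_pos x n) (norm_cocycle_le hA x n)
  rcases n.eq_zero_or_pos with rfl | hn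
  · simpa using (abs_nonneg _).trans (hlog 1)
  · rw [abs_mul, abs_of_pos (by positivity), one_div_mul_eq_div, div_le_iff₀ (by positivity),
      mul_comm]
    exact hlog n

theorem div_log_norm_cocycle_add_le [Nonempty (Fin m)]
    (hA : ∀ y, ‖(A y : Matrix (Fin m) (Fin m) ℝ)‖ ≤ C) {x : X} {p l : ℕ} {D b : ℝ} (hD : 0 < D)
    (hup : ‖cocycle f A (f^[p] x) l‖ ≤ D * Real.exp (l * b)) :
    1 / ((p + l : ℕ) : ℝ) * Real.log ‖cocycle f A x (p + l)‖ ≤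
      (Real.log D + l * b + p * Real.log C) / (p + l) := by
  have hlog : Real.log ‖cocycle f A x (p + l)‖ ≤ Real.log D + l * b + p * Real.log C := by
    have h1 := Real.log_le_log_add_log_of_le_mul (norm_cocycle_pos (f := f) x (p + l))
      (norm_nonneg _) (norm_cocycle_add_le hA x p l)
    have h2 := Real.log_le_log (norm_cocycle_pos _ l) hup
    rw [Real.log_mul hD.ne' (Real.exp_pos _).ne', Real.log_exp] at h2
    rw [Real.log_pow] at h1
    linarith
  rw [one_div_mul_eq_div]
  push_cast
  gcongr

theorem le_div_log_norm_cocycle_add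
    (hA : ∀ y, ‖((A y)⁻¹ : Matrix (Fin m) (Fin m) ℝ)‖ ≤ C) {x : X} {q h : ℕ} {D a : ℝ}
    (hD : 0 < D) (hlow : D⁻¹ * Real.exp (h * a) ≤ ‖cocycle f A (f^[q] x) h‖) :
    (Real.log D⁻¹ + h * a + q * Real.log C⁻¹) / (q + h) ≤
      1 / ((q + h : ℕ) : ℝ) * Real.log ‖cocycle f A x (q + h)‖ := by
  have hlog : Real.log D⁻¹ + h * a + q * Real.log C⁻¹ ≤ Real.log ‖cocycle f A x (q + h)‖ := by
    have h1 := Real.log_le_log_add_log_of_le_mul (by positivity) (norm_nonneg _)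
      (hlow.trans (norm_cocycle_iterate_le hA x q h))
    rw [Real.log_mul (by positivity) (Real.exp_pos _).ne', Real.log_exp, Real.log_pow] at h1
    rw [Real.log_inv C]
    linarith
  rw [one_div_mul_eq_div]
  push_cast
  gcongr

end Cocycle

theorem mem_MLI_of_window_norm_bounds_general
    {X : Type*} {m : ℕ} (f : X → X)
    (A : X → Matrix.GeneralLinearGroup (Fin m) ℝ)
    (C : ℝ)
    (hC : IsGreatest (Set.range fun y : X =>
      max ‖(A y : Matrix (Fin m) (Fin m) ℝ)‖ ‖((A y)⁻¹ : Matrix (Fin m) (Fin m) ℝ)‖) C)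
    (x : X) (a b : ℝ) (hab : b < a) (D : ℝ) (hD : 0 < D)
    (P L Q H : ℕ → ℕ)
    (hL : Filter.Tendsto L Filter.atTop Filter.atTop)
    (hH : Filter.Tendsto H Filter.atTop Filter.atTop)
    (hPL : Filter.Tendsto (fun k => (P k : ℝ) / ((P k : ℝ) + (L k : ℝ)))
      Filter.atTop (nhds 0))
    (hQH : Filter.Tendsto (fun k => (Q k : ℝ) / ((Q k : ℝ) + (H k : ℝ)))
      Filter.atTop (nhds 0))
    (hupper : ∀ k, ‖cocycle f A (f^[P k] x) (L k)‖ ≤ D * Real.exp ((L k : ℝ) * b))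
    (hlower : ∀ k, D⁻¹ * Real.exp ((H k : ℝ) * a) ≤ ‖cocycle f A (f^[Q k] x) (H k)‖) :
    a ≤ Filter.atTop.limsup (fun n : ℕ => (1 / (n : ℝ)) * Real.log ‖cocycle f A x n‖) ∧
    Filter.atTop.liminf (fun n : ℕ => (1 / (n : ℝ)) * Real.log ‖cocycle f A x n‖) ≤ b ∧
    x ∈ MLI f A := by
  have : Nonempty (Fin m) := by
    have hne : cocycle f A (f^[Q 0] x) (H 0) ≠ 0 :=
      norm_pos_iff.mp ((by positivity : (0 : ℝ) < _).trans_le (hlower 0))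
    by_contra! hm
    exact hne (Subsingleton.elim _ _)
  have hA y : ‖(A y : Matrix (Fin m) (Fin m) ℝ)‖ ≤ C := (le_max_left _ _).trans (hC.2 ⟨y, rfl⟩)
  have hAinv y : ‖((A y)⁻¹ : Matrix (Fin m) (Fin m) ℝ)‖ ≤ C :=
    (le_max_right _ _).trans (hC.2 ⟨y, rfl⟩)
  obtain ⟨hbddAbove, hbddBelow⟩ :=
    isBoundedUnder_le_abs.mp (isBoundedUnder_of ⟨_, abs_div_log_norm_cocycle_le hA hAinv x⟩)
  have hlimsup := le_limsup_of_tendsto_of_le_comp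
    (tendsto_atTop_mono (fun k => Nat.le_add_left (H k) (Q k)) hH)
    (tendsto_add_mul_div_window hH hQH _ a _)
    (fun k => le_div_log_norm_cocycle_add hAinv hD (hlower k)) hbddAbove
  have hliminf := liminf_le_of_tendsto_of_comp_le
    (tendsto_atTop_mono (fun k => Nat.le_add_left (L k) (P k)) hL)
    (tendsto_add_mul_div_window hL hPL _ b _)
    (fun k => div_log_norm_cocycle_add_le hA hD (hupper k)) hbddBelow
  refine ⟨hlimsup, hliminf, fun ⟨χ, hχ⟩ => ?_⟩
  rw [hχ.limsup_eq] at hlimsup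
  rw [hχ.liminf_eq] at hliminf
  linarith

/-- With `C = max_{x ∈ X} max(‖A(x)‖, ‖A(x)⁻¹‖)`, if along sparse windows the
cocycle norm is at most `D e^{L_k b}` (resp. at least `D⁻¹ e^{H_k a}`) with `a > b`, then
`limsup (1/n) log‖A(x,n)‖ ≥ a > b ≥ liminf (1/n) log‖A(x,n)‖`, so the sequence diverges; in
particular `x ∈ MLI(A,f)`. -/
theorem mem_MLI_of_window_norm_bounds
    {X : Type*} [MetricSpace X] [CompactSpace X] {m : ℕ} (f : X → X) (hf : Continuous f)
    (A : X → Matrix.GeneralLinearGroup (Fin m) ℝ)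
    (hA : Continuous fun x => (A x : Matrix (Fin m) (Fin m) ℝ))
    (C : ℝ)
    (hC : IsGreatest (Set.range fun y : X =>
      max ‖(A y : Matrix (Fin m) (Fin m) ℝ)‖ ‖((A y)⁻¹ : Matrix (Fin m) (Fin m) ℝ)‖) C)
    (x : X) (a b : ℝ) (hab : b < a) (D : ℝ) (hD : 0 < D)
    (P L Q H : ℕ → ℕ)
    (hL : Filter.Tendsto L Filter.atTop Filter.atTop)
    (hH : Filter.Tendsto H Filter.atTop Filter.atTop)
    (hPL : Filter.Tendsto (fun k => (P k : ℝ) / ((P k : ℝ) + (L k : ℝ)))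
      Filter.atTop (nhds 0))
    (hQH : Filter.Tendsto (fun k => (Q k : ℝ) / ((Q k : ℝ) + (H k : ℝ)))
      Filter.atTop (nhds 0))
    (hupper : ∀ k, ‖cocycle f A (f^[P k] x) (L k)‖ ≤ D * Real.exp ((L k : ℝ) * b))
    (hlower : ∀ k, D⁻¹ * Real.exp ((H k : ℝ) * a) ≤ ‖cocycle f A (f^[Q k] x) (H k)‖) :
    a ≤ Filter.atTop.limsup (fun n : ℕ => (1 / (n : ℝ)) * Real.log ‖cocycle f A x n‖) ∧
    Filter.atTop.liminf (fun n : ℕ => (1 / (n : ℝ)) * Real.log ‖cocycle f A x n‖) ≤ b ∧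
    x ∈ MLI f A :=
  mem_MLI_of_window_norm_bounds_general f A C hC x a b hab D hD P L Q H hL hH hPL hQH hupper hlower
end
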